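/- Let S1, S2, W1, X1, X2, Y, Ŝ1, Ŝ2 be finite-valued random variables on a common probability space such that (i) I(S1, S2; Y | X1, X2, W1) = 0 (the chain (S1,S2) – (X1,X2) – Y holds given W1), (ii) I(S1; S2 | W1) = 0 (S1 and S2 are conditionally independent given W1), and (iii) I(S1, S2; Ŝ1, Ŝ2 | Y, W1) = 0 (the estimates depend on (S1,S2) only through (Y, W1)). Then I(X1, X2; Y | W1) ≥ H(S1 | W1) + H(S2 | W1) − H(S1, S2 | Ŝ1, Ŝ2). -/
import Mathlib


open scoped BigOperators Classical

noncomputable section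

/-- Probability that the random variable `X` equals `a`, under the pmf `μ`
on the finite sample space `Ω`. -/
def prD {Ω α : Type} [Fintype Ω] (μ : Ω → ℝ) (X : Ω → α) (a : α) : ℝ :=
  ∑ ω, if X ω = a then μ ω else 0

/-- Shannon entropy (in nats) of the random variable `X` under the pmf `μ`. -/
def ent {Ω α : Type} [Fintype Ω] [Fintype α] (μ : Ω → ℝ) (X : Ω → α) : ℝ :=
  -∑ a, prD μ X a * Real.log (prD μ X a)

/-- Conditional entropy `H(X | Y)` under the pmf `μ`. -/
def condEnt {Ω α β : Type} [Fintype Ω] [Fintype α] [Fintype β]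
    (μ : Ω → ℝ) (X : Ω → α) (Y : Ω → β) : ℝ :=
  ent μ (fun ω => (X ω, Y ω)) - ent μ Y

/-- Mutual information `I(X ; Y)` under the pmf `μ`. -/
def mutInf {Ω α β : Type} [Fintype Ω] [Fintype α] [Fintype β]
    (μ : Ω → ℝ) (X : Ω → α) (Y : Ω → β) : ℝ :=
  ent μ X + ent μ Y - ent μ (fun ω => (X ω, Y ω))

/-- Conditional mutual information `I(X ; Y | Z)` under the pmf `μ`. -/
def condMutInf {Ω α β γ : Type} [Fintype Ω] [Fintype α] [Fintype β] [Fintype γ]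
    (μ : Ω → ℝ) (X : Ω → α) (Y : Ω → β) (Z : Ω → γ) : ℝ :=
  condEnt μ X Z - condEnt μ X (fun ω => (Y ω, Z ω))

/-- `p` is a probability mass function on the finite type `α`. -/
def IsPmf {α : Type} [Fintype α] (p : α → ℝ) : Prop :=
  (∀ a, 0 ≤ p a) ∧ ∑ a, p a = 1

section helper
variable {Ω : Type} [Fintype Ω]

lemma prD_nonneg {α : Type} (μ : Ω → ℝ) (hμ0 : ∀ ω, 0 ≤ μ ω) (X : Ω → α) (a : α) :
    0 ≤ prD μ X a := by
  unfold prD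
  exact Finset.sum_nonneg fun ω _ => by split_ifs; exacts [hμ0 ω, le_rfl]

lemma prD_sum {α : Type} [Fintype α] (μ : Ω → ℝ) (X : Ω → α) :
    ∑ a, prD μ X a = ∑ ω, μ ω := by
  unfold prD
  rw [Finset.sum_comm]
  exact Finset.sum_congr rfl fun ω _ => by simp

lemma prD_mono {α β : Type} (μ : Ω → ℝ) (hμ0 : ∀ ω, 0 ≤ μ ω)
    (T : Ω → α) (f : α → β) (t : α) :
    prD μ T t ≤ prD μ (fun ω => f (T ω)) (f t) := by
  unfold prD
  refine Finset.sum_le_sum fun ω _ => ?_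
  by_cases h : T ω = t
  · simp [h]
  · simp only [h, if_false]
    split_ifs
    exacts [hμ0 ω, le_rfl]

lemma sum_prD_push {α β : Type} [Fintype α] [Fintype β] (μ : Ω → ℝ)
    (T : Ω → α) (f : α → β) (F : β → ℝ) :
    ∑ b, prD μ (fun ω => f (T ω)) b * F b = ∑ t, prD μ T t * F (f t) := by
  unfold prD
  have L : ∑ b, (∑ ω, if f (T ω) = b then μ ω else 0) * F b
      = ∑ ω, μ ω * F (f (T ω)) := by
    simp only [Finset.sum_mul, ite_mul, zero_mul]
    rw [Finset.sum_comm]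
    exact Finset.sum_congr rfl fun ω _ => by simp
  have R : ∑ t, (∑ ω, if T ω = t then μ ω else 0) * F (f t)
      = ∑ ω, μ ω * F (f (T ω)) := by
    simp only [Finset.sum_mul, ite_mul, zero_mul]
    rw [Finset.sum_comm]
    refine Finset.sum_congr rfl fun ω _ => ?_
    simp
  rw [L, R]

lemma prD_marg {α γ : Type} [Fintype α] (μ : Ω → ℝ) (U : Ω → α) (Z : Ω → γ) (z : γ) :
    ∑ x, prD μ (fun ω => (U ω, Z ω)) (x, z) = prD μ Z z := by
  unfold prD
  rw [Finset.sum_comm]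
  refine Finset.sum_congr rfl fun ω _ => ?_
  simp [Prod.ext_iff, ite_and]

lemma prD_relabel {α β : Type} (μ : Ω → ℝ) (e : α ≃ β) (X : Ω → α) (b : β) :
    prD μ (fun ω => e (X ω)) b = prD μ X (e.symm b) := by
  unfold prD
  refine Finset.sum_congr rfl fun ω _ => ?_
  rw [Equiv.apply_eq_iff_eq_symm_apply]

lemma ent_relabel {α β : Type} [Fintype α] [Fintype β] (μ : Ω → ℝ) (e : α ≃ β) (X : Ω → α) :
    ent μ (fun ω => e (X ω)) = ent μ X := by
  unfold ent
  congr 1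
  simp only [prD_relabel]
  exact Equiv.sum_comp e.symm (fun a => prD μ X a * Real.log (prD μ X a))

lemma ent_relabel2 {α β : Type} [Fintype α] [Fintype β]
    (μ : Ω → ℝ) (e : α ≃ β) (X : Ω → α) (X' : Ω → β) (h : ∀ ω, X' ω = e (X ω)) :
    ent μ X' = ent μ X := by
  have hX : X' = fun ω => e (X ω) := funext h
  rw [hX, ent_relabel]

end helper

lemma condMutInf_nonneg {Ω α β γ : Type} [Fintype Ω] [Fintype α] [Fintype β] [Fintype γ]
    (μ : Ω → ℝ) (hμ : IsPmf μ) (X : Ω → α) (Y : Ω → β) (Z : Ω → γ) :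
    0 ≤ condMutInf μ X Y Z := by
  obtain ⟨hμ0, hμ1⟩ := hμ
  have hXZ : ∑ b : α × γ, prD μ (fun ω => (X ω, Z ω)) b * Real.log (prD μ (fun ω => (X ω, Z ω)) b)
      = ∑ t : α × β × γ, prD μ (fun ω => (X ω, Y ω, Z ω)) t *
          Real.log (prD μ (fun ω => (X ω, Z ω)) (t.1, t.2.2)) :=
    sum_prD_push μ (fun ω => (X ω, Y ω, Z ω)) (fun t => (t.1, t.2.2)) _
  have hYZ : ∑ b : β × γ, prD μ (fun ω => (Y ω, Z ω)) b * Real.log (prD μ (fun ω => (Y ω, Z ω)) b)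
      = ∑ t : α × β × γ, prD μ (fun ω => (X ω, Y ω, Z ω)) t *
          Real.log (prD μ (fun ω => (Y ω, Z ω)) t.2) :=
    sum_prD_push μ (fun ω => (X ω, Y ω, Z ω)) (fun t => t.2) _
  have hZ : ∑ c : γ, prD μ Z c * Real.log (prD μ Z c)
      = ∑ t : α × β × γ, prD μ (fun ω => (X ω, Y ω, Z ω)) t *
          Real.log (prD μ Z t.2.2) :=
    sum_prD_push μ (fun ω => (X ω, Y ω, Z ω)) (fun t => t.2.2) _
  have key : condMutInf μ X Y Z
      = ∑ t : α × β × γ, prD μ (fun ω => (X ω, Y ω, Z ω)) t *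
          (Real.log (prD μ (fun ω => (X ω, Y ω, Z ω)) t)
            + Real.log (prD μ Z t.2.2)
            - Real.log (prD μ (fun ω => (X ω, Z ω)) (t.1, t.2.2))
            - Real.log (prD μ (fun ω => (Y ω, Z ω)) t.2)) := by
    simp only [condMutInf, condEnt, ent]
    rw [hXZ, hYZ, hZ]
    simp only [mul_add, mul_sub, Finset.sum_add_distrib, Finset.sum_sub_distrib]
    ring
  rw [key]
  have hsum1 : ∑ t : α × β × γ, prD μ (fun ω => (X ω, Y ω, Z ω)) t = 1 := by
    rw [prD_sum]; exact hμ1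
  have hqle : ∑ t : α × β × γ,
      prD μ (fun ω => (X ω, Z ω)) (t.1, t.2.2) * prD μ (fun ω => (Y ω, Z ω)) t.2
        / prD μ Z t.2.2 ≤ 1 := by
    have hre : ∑ t : α × β × γ,
        prD μ (fun ω => (X ω, Z ω)) (t.1, t.2.2) * prD μ (fun ω => (Y ω, Z ω)) t.2
          / prD μ Z t.2.2
        = ∑ x, ∑ z, ∑ y, prD μ (fun ω => (X ω, Z ω)) (x, z) * prD μ (fun ω => (Y ω, Z ω)) (y, z)
          / prD μ Z z := by
      rw [Fintype.sum_prod_type]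
      refine Finset.sum_congr rfl fun x _ => ?_
      rw [Fintype.sum_prod_type, Finset.sum_comm]
    rw [hre]
    have h1 : ∀ x z, (∑ y, prD μ (fun ω => (X ω, Z ω)) (x, z) * prD μ (fun ω => (Y ω, Z ω)) (y, z)
        / prD μ Z z) ≤ prD μ (fun ω => (X ω, Z ω)) (x, z) := by
      intro x z
      have he : (∑ y, prD μ (fun ω => (X ω, Z ω)) (x, z) * prD μ (fun ω => (Y ω, Z ω)) (y, z)
          / prD μ Z z) = prD μ (fun ω => (X ω, Z ω)) (x, z) / prD μ Z z * prD μ Z z := by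
        rw [← prD_marg μ Y Z z, Finset.mul_sum]
        exact Finset.sum_congr rfl fun y _ => by ring
      rw [he]
      by_cases hc : prD μ Z z = 0
      · rw [hc, mul_zero]
        exact prD_nonneg μ hμ0 _ _
      · rw [div_mul_cancel₀ _ hc]
    calc (∑ x, ∑ z, ∑ y, prD μ (fun ω => (X ω, Z ω)) (x, z) * prD μ (fun ω => (Y ω, Z ω)) (y, z)
          / prD μ Z z)
        ≤ ∑ x, ∑ z, prD μ (fun ω => (X ω, Z ω)) (x, z) :=
          Finset.sum_le_sum fun x _ => Finset.sum_le_sum fun z _ => h1 x z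
      _ = 1 := by rw [← Fintype.sum_prod_type, prD_sum]; exact hμ1
  have hterm : ∀ t : α × β × γ,
      prD μ (fun ω => (X ω, Y ω, Z ω)) t -
        prD μ (fun ω => (X ω, Z ω)) (t.1, t.2.2) * prD μ (fun ω => (Y ω, Z ω)) t.2
          / prD μ Z t.2.2
      ≤ prD μ (fun ω => (X ω, Y ω, Z ω)) t *
          (Real.log (prD μ (fun ω => (X ω, Y ω, Z ω)) t)
            + Real.log (prD μ Z t.2.2)
            - Real.log (prD μ (fun ω => (X ω, Z ω)) (t.1, t.2.2))
            - Real.log (prD μ (fun ω => (Y ω, Z ω)) t.2)) := by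
    intro t
    set p := prD μ (fun ω => (X ω, Y ω, Z ω)) t with hp
    set a := prD μ (fun ω => (X ω, Z ω)) (t.1, t.2.2) with ha
    set b := prD μ (fun ω => (Y ω, Z ω)) t.2 with hb
    set c := prD μ Z t.2.2 with hc
    have hp0 : 0 ≤ p := prD_nonneg μ hμ0 _ _
    have ha0 : 0 ≤ a := prD_nonneg μ hμ0 _ _
    have hb0 : 0 ≤ b := prD_nonneg μ hμ0 _ _
    have hc0 : 0 ≤ c := prD_nonneg μ hμ0 _ _
    have hpa : p ≤ a := prD_mono μ hμ0 (fun ω => (X ω, Y ω, Z ω)) (fun t => (t.1, t.2.2)) t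
    have hpb : p ≤ b := prD_mono μ hμ0 (fun ω => (X ω, Y ω, Z ω)) (fun t => t.2) t
    have hpc : p ≤ c := prD_mono μ hμ0 (fun ω => (X ω, Y ω, Z ω)) (fun t => t.2.2) t
    by_cases hp' : p = 0
    · rw [hp', zero_mul, zero_sub]
      have : 0 ≤ a * b / c := div_nonneg (mul_nonneg ha0 hb0) hc0
      linarith
    · have hppos : 0 < p := lt_of_le_of_ne hp0 (Ne.symm hp')
      have hapos : 0 < a := lt_of_lt_of_le hppos hpa
      have hbpos : 0 < b := lt_of_lt_of_le hppos hpb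
      have hcpos : 0 < c := lt_of_lt_of_le hppos hpc
      have hqp : (0:ℝ) < a * b / c / p := by positivity
      have hlog := Real.log_le_sub_one_of_pos hqp
      have hlogeq : Real.log (a * b / c / p)
          = Real.log a + Real.log b - Real.log c - Real.log p := by
        rw [div_div, Real.log_div (by positivity) (by positivity),
          Real.log_mul (ne_of_gt hapos) (ne_of_gt hbpos),
          Real.log_mul (ne_of_gt hcpos) (ne_of_gt hppos)]
        ring
      rw [hlogeq] at hlog
      have h2 : p * (Real.log a + Real.log b - Real.log c - Real.log p) ≤ a * b / c - p := by
        have hm := mul_le_mul_of_nonneg_left hlog hp0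
        have he : p * (a * b / c / p - 1) = a * b / c - p := by field_simp
        linarith
      have h3 : p * (Real.log p + Real.log c - Real.log a - Real.log b)
          = -(p * (Real.log a + Real.log b - Real.log c - Real.log p)) := by ring
      linarith
  have hsl := Finset.sum_le_sum (fun t (_ : t ∈ (Finset.univ : Finset (α × β × γ))) => hterm t)
  rw [Finset.sum_sub_distrib, hsum1] at hsl
  linarith

set_option maxHeartbeats 1000000 in
/-- If `I(S1,S2; Y | X1,X2,W1) = 0` (the chain `(S1,S2) – (X1,X2) – Y`
holds given `W1`), `I(S1; S2 | W1) = 0` (`S1` and `S2` are conditionally independent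
given `W1`), and `I(S1,S2; Ŝ1,Ŝ2 | Y,W1) = 0` (the estimates depend on the sources only
through `(Y, W1)`), then `I(X1,X2; Y | W1) ≥ H(S1|W1) + H(S2|W1) − H(S1,S2|Ŝ1,Ŝ2)`. -/
theorem mac_side_info_converse_sum_rate
    {Ω S1t S2t W1t X1t X2t Yt : Type}
    [Fintype Ω] [Fintype S1t] [Fintype S2t] [Fintype W1t]
    [Fintype X1t] [Fintype X2t] [Fintype Yt]
    (μ : Ω → ℝ) (hμ : IsPmf μ)
    (S1 : Ω → S1t) (S2 : Ω → S2t) (W1 : Ω → W1t)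
    (X1 : Ω → X1t) (X2 : Ω → X2t) (Y : Ω → Yt)
    (Shat1 : Ω → S1t) (Shat2 : Ω → S2t)
    (h1 : condMutInf μ (fun ω => (S1 ω, S2 ω)) Y (fun ω => (X1 ω, X2 ω, W1 ω)) = 0)
    (h2 : condMutInf μ S1 S2 W1 = 0)
    (h3 : condMutInf μ (fun ω => (S1 ω, S2 ω)) (fun ω => (Shat1 ω, Shat2 ω))
      (fun ω => (Y ω, W1 ω)) = 0) :
    condEnt μ S1 W1 + condEnt μ S2 W1 -
        condEnt μ (fun ω => (S1 ω, S2 ω)) (fun ω => (Shat1 ω, Shat2 ω)) ≤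
      condMutInf μ (fun ω => (X1 ω, X2 ω)) Y W1 := by
  have N1 := condMutInf_nonneg μ hμ (fun ω => (S1 ω, S2 ω)) W1 (fun ω => (Shat1 ω, Shat2 ω))
  have N2 := condMutInf_nonneg μ hμ (fun ω => (S1 ω, S2 ω)) Y
    (fun ω => ((Shat1 ω, Shat2 ω), W1 ω))
  have N3 := condMutInf_nonneg μ hμ Y (fun ω => (X1 ω, X2 ω)) (fun ω => ((S1 ω, S2 ω), W1 ω))
  simp only [condMutInf, condEnt] at h1 h2 h3 N1 N2 N3 ⊢
  have R1 : ent μ (fun ω => (S1 ω, (S2 ω, W1 ω)))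
      = ent μ (fun ω => ((S1 ω, S2 ω), W1 ω)) :=
    ent_relabel2 μ ⟨fun t => (t.1.1, (t.1.2, t.2)), fun t => ((t.1, t.2.1), t.2.2),
      fun _ => rfl, fun _ => rfl⟩ _ _ (fun ω => rfl)
  have R2a : ent μ (fun ω => ((S1 ω, S2 ω), (W1 ω, (Shat1 ω, Shat2 ω))))
      = ent μ (fun ω => ((S1 ω, S2 ω), ((Shat1 ω, Shat2 ω), W1 ω))) :=
    ent_relabel2 μ ⟨fun t => (t.1, (t.2.2, t.2.1)), fun t => (t.1, (t.2.2, t.2.1)),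
      fun _ => rfl, fun _ => rfl⟩ _ _ (fun ω => rfl)
  have R2b : ent μ (fun ω => (W1 ω, (Shat1 ω, Shat2 ω)))
      = ent μ (fun ω => ((Shat1 ω, Shat2 ω), W1 ω)) :=
    ent_relabel2 μ ⟨fun t => (t.2, t.1), fun t => (t.2, t.1),
      fun _ => rfl, fun _ => rfl⟩ _ _ (fun ω => rfl)
  have R4 : ent μ (fun ω => ((S1 ω, S2 ω), (Y ω, ((Shat1 ω, Shat2 ω), W1 ω))))
      = ent μ (fun ω => ((S1 ω, S2 ω), ((Shat1 ω, Shat2 ω), (Y ω, W1 ω)))) :=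
    ent_relabel2 μ ⟨fun t => (t.1, (t.2.2.1, (t.2.1, t.2.2.2))),
      fun t => (t.1, (t.2.2.1, (t.2.1, t.2.2.2))),
      fun _ => rfl, fun _ => rfl⟩ _ _ (fun ω => rfl)
  have R5 : ent μ (fun ω => (Y ω, ((Shat1 ω, Shat2 ω), W1 ω)))
      = ent μ (fun ω => ((Shat1 ω, Shat2 ω), (Y ω, W1 ω))) :=
    ent_relabel2 μ ⟨fun t => (t.2.1, (t.1, t.2.2)), fun t => (t.2.1, (t.1, t.2.2)),
      fun _ => rfl, fun _ => rfl⟩ _ _ (fun ω => rfl)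
  have R6a : ent μ (fun ω => (X1 ω, (X2 ω, W1 ω)))
      = ent μ (fun ω => ((X1 ω, X2 ω), W1 ω)) :=
    ent_relabel2 μ ⟨fun t => (t.1.1, (t.1.2, t.2)), fun t => ((t.1, t.2.1), t.2.2),
      fun _ => rfl, fun _ => rfl⟩ _ _ (fun ω => rfl)
  have R6b : ent μ (fun ω => ((S1 ω, S2 ω), (X1 ω, (X2 ω, W1 ω))))
      = ent μ (fun ω => ((X1 ω, X2 ω), ((S1 ω, S2 ω), W1 ω))) :=
    ent_relabel2 μ ⟨fun t => (t.2.1, (t.1.1, (t.1.2, t.2.2))),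
      fun t => ((t.2.1, t.2.2.1), (t.1, t.2.2.2)),
      fun _ => rfl, fun _ => rfl⟩ _ _ (fun ω => rfl)
  have R7 : ent μ (fun ω => ((S1 ω, S2 ω), (Y ω, W1 ω)))
      = ent μ (fun ω => (Y ω, ((S1 ω, S2 ω), W1 ω))) :=
    ent_relabel2 μ ⟨fun t => (t.2.1, (t.1, t.2.2)), fun t => (t.2.1, (t.1, t.2.2)),
      fun _ => rfl, fun _ => rfl⟩ _ _ (fun ω => rfl)
  have R8 : ent μ (fun ω => ((S1 ω, S2 ω), (Y ω, (X1 ω, (X2 ω, W1 ω)))))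
      = ent μ (fun ω => (Y ω, ((X1 ω, X2 ω), ((S1 ω, S2 ω), W1 ω)))) :=
    ent_relabel2 μ ⟨fun t => (t.2.2.1, (t.1, (t.2.1.1, (t.2.1.2, t.2.2.2)))),
      fun t => (t.2.1, ((t.2.2.1, t.2.2.2.1), (t.1, t.2.2.2.2))),
      fun _ => rfl, fun _ => rfl⟩ _ _ (fun ω => rfl)
  have R9 : ent μ (fun ω => (Y ω, (X1 ω, (X2 ω, W1 ω))))
      = ent μ (fun ω => ((X1 ω, X2 ω), (Y ω, W1 ω))) :=
    ent_relabel2 μ ⟨fun t => (t.2.1, (t.1.1, (t.1.2, t.2.2))),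
      fun t => ((t.2.1, t.2.2.1), (t.1, t.2.2.2)),
      fun _ => rfl, fun _ => rfl⟩ _ _ (fun ω => rfl)
  linarith [h1, h2, h3, N1, N2, N3, R1, R2a, R2b, R4, R5, R6a, R6b, R7, R8, R9]
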